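/- Let a, b be nonnegative integers and let L be a ℤ-linear automorphism of ℤ³ such that L maps the set {(0,0,1), (-a,a,1), (0,0,-1), (a,-a,-1)} onto the set {(0,0,1), (-b,b,1), (0,0,-1), (b,-b,-1)} and maps the set {(1,0,0), (0,1,0), (-1,0,0), (0,-1,0)} onto itself. Then a = b. -/

import Mathlib

/-!
Since `-a e₁ + a e₂ + e₃ - e₃ = a (e₂ - e₁)`, the images under `L` of the two characteristic
vectors with last coordinate `1` differ by `a • L (e₂ - e₁)`. Here `L e₁, L e₂` are non-opposite
distinct axis vectors, so this difference has last coordinate `0` and first coordinate `±a`. The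
only differences of elements of `{±e₃, ±(-b, b, 1)}` with last coordinate `0` have first
coordinate `0` or `±b`, so `a = 0` or `|a| = |b|`; applying this to `L⁻¹` as well gives `|a| = |b|`.
-/

open Set Function

def charVectors (a : ℤ) : Set (Fin 3 → ℤ) := {![0, 0, 1], ![-a, a, 1], ![0, 0, -1], ![a, -a, -1]}

def axisVectors : Set (Fin 3 → ℤ) := {![1, 0, 0], ![0, 1, 0], ![-1, 0, 0], ![0, -1, 0]}

lemma sub_apply_of_mem_axisVectors {u v : Fin 3 → ℤ} (hu : u ∈ axisVectors) (hv : v ∈ axisVectors)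
    (huv : u ≠ v) (huv' : u ≠ -v) : (u - v) 2 = 0 ∧ |(u - v) 0| = 1 := by
  simp only [axisVectors, mem_insert_iff, mem_singleton_iff] at hu hv
  revert huv huv'
  rcases hu with rfl | rfl | rfl | rfl <;> rcases hv with rfl | rfl | rfl | rfl <;> decide

lemma sub_apply_of_mem_charVectors {b : ℤ} {x y : Fin 3 → ℤ} (hx : x ∈ charVectors b)
    (hy : y ∈ charVectors b) (hxy : (x - y) 2 = 0) : (x - y) 0 = 0 ∨ |(x - y) 0| = |b| := by
  simp only [charVectors, mem_insert_iff, mem_singleton_iff] at hx hy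
  rcases hx with rfl | rfl | rfl | rfl <;> rcases hy with rfl | rfl | rfl | rfl <;>
    simp [abs_neg] at hxy ⊢

lemma eq_zero_or_abs_eq_of_mapsTo (a b : ℤ) (L : (Fin 3 → ℤ) →ₗ[ℤ] (Fin 3 → ℤ))
    (hL : Injective L) (h1 : MapsTo L (charVectors a) (charVectors b))
    (h2 : MapsTo L axisVectors axisVectors) : a = 0 ∨ |a| = |b| := by
  set d := L ![0, 1, 0] - L ![1, 0, 0]
  have hd : d 2 = 0 ∧ |d 0| = 1 := by
    refine sub_apply_of_mem_axisVectors (h2 (by simp [axisVectors]))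
      (h2 (by simp [axisVectors])) (fun h => ?_) (fun h => ?_)
    · simpa using congrFun (hL h) 1
    · rw [← map_neg] at h
      simpa using congrFun (hL h) 1
  have hw : L ![-a, a, 1] - L ![0, 0, 1] = a • d := by
    have hdecomp : (![-a, a, 1] : Fin 3 → ℤ) = ![0, 0, 1] + a • (![0, 1, 0] - ![1, 0, 0]) := by
      ext i; fin_cases i <;> simp
    rw [hdecomp, map_add, map_smul, map_sub, add_sub_cancel_left]
  have hfirst := sub_apply_of_mem_charVectors (h1 (x := ![-a, a, 1]) (by simp [charVectors]))
    (h1 (x := ![0, 0, 1]) (by simp [charVectors])) (by rw [hw, Pi.smul_apply, hd.1, smul_zero])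
  rw [hw, Pi.smul_apply, smul_eq_mul, abs_mul, hd.2, mul_one, mul_eq_zero] at hfirst
  have hd0 : d 0 ≠ 0 := fun h => by simp [h] at hd
  simpa [hd0] using hfirst

lemma abs_eq_abs_of_image_eq (a b : ℤ) (L : (Fin 3 → ℤ) ≃ₗ[ℤ] (Fin 3 → ℤ))
    (h1 : L '' charVectors a = charVectors b) (h2 : L '' axisVectors = axisVectors) :
    |a| = |b| := by
  have mapsTo_symm {s t : Set (Fin 3 → ℤ)} (h : L '' s = t) : MapsTo L.symm t s := by
    rw [← h, L.image_eq_preimage_symm]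
    exact mapsTo_preimage _ _
  rcases eq_zero_or_abs_eq_of_mapsTo a b L L.injective (fun _ hx => h1 ▸ mem_image_of_mem L hx)
    (fun _ hx => h2 ▸ mem_image_of_mem L hx) with rfl | h
  · rcases eq_zero_or_abs_eq_of_mapsTo b 0 L.symm L.symm.injective (mapsTo_symm h1)
      (mapsTo_symm h2) with rfl | h <;> simp_all
  · exact h

/-- If a `ℤ`-linear automorphism of `ℤ³` maps the set of characteristic vectors
`{±(0,0,1), ±(-a,a,1)}` onto `{±(0,0,1), ±(-b,b,1)}` and the set
`{±(1,0,0), ±(0,1,0)}` onto itself, then `a = b`. -/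
theorem char_vectors_rigidity (a b : ℤ) (ha : 0 ≤ a) (hb : 0 ≤ b)
    (L : (Fin 3 → ℤ) ≃ₗ[ℤ] (Fin 3 → ℤ))
    (h1 : (⇑L) '' {![0, 0, 1], ![-a, a, 1], ![0, 0, -1], ![a, -a, -1]} =
      {![0, 0, 1], ![-b, b, 1], ![0, 0, -1], ![b, -b, -1]})
    (h2 : (⇑L) '' {![1, 0, 0], ![0, 1, 0], ![-1, 0, 0], ![0, -1, 0]} =
      {![1, 0, 0], ![0, 1, 0], ![-1, 0, 0], ![0, -1, 0]}) :
    a = b := by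
  simpa [abs_of_nonneg ha, abs_of_nonneg hb] using abs_eq_abs_of_image_eq a b L h1 h2
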